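/- arXiv:cs/9809035 — 2 statements merged into one kernel-verified Lean document; each statement's English description precedes it below -/
import Mathlib

section
/- For any convex polygon P of diameter D and any ε > 0, there is a convex polygon Q with at most O(√(D/ε)) vertices such that P ⊆ Q and every point of Q is within distance ε of P (Dudley's approximation theorem in the plane). -/
/-!
Put a `δ`-net of `m ≈ √(D/ε)` points `z` on the circle of radius `2D` about a point of `P`, with
`δ ≈ √(εD)`, and push each `z` to its nearest point `p` in `P` and then a distance `ε` further
along the outer normal `z - p`. These points lie in the `ε`-neighbourhood of `P`, which is
convex, so their hull does too. Conversely, the support point of `P` in a direction `w` is the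
nearest point of some point of the circle, which is `δ`-close to some `z` of the net. The
nearest-point map is `1`-Lipschitz and the unit normals at distance `≥ D` from `P` move by
`O(δ / D)`, so the point built from `z` lies beyond `P` in direction `w` as soon as
`4δ(ε + δ) ≤ εD`; by Hahn–Banach, `P` lies in the hull.
-/

open Metric Real
open scoped RealInnerProductSpace

lemma le_norm_sub_of_mem_sphere {E : Type*} [SeminormedAddCommGroup E] {z₀ z q : E} {D : ℝ}
    (hz : z ∈ sphere z₀ (2 * D)) (hq : q ∈ closedBall z₀ D) : D ≤ ‖z - q‖ := by
  rw [← dist_eq_norm]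
  linarith [dist_triangle z q z₀, mem_sphere.1 hz, mem_closedBall.1 hq]

section NormedSpace

variable {E : Type*} [NormedAddCommGroup E] [NormedSpace ℝ E]

lemma norm_normalize_sub_normalize_le {a b : E} {r : ℝ} (hr : 0 < r) (ha : r ≤ ‖a‖)
    (hb : r ≤ ‖b‖) : ‖NormedSpace.normalize a - NormedSpace.normalize b‖ ≤ 2 * ‖a - b‖ / r := by
  have ha0 : 0 < ‖a‖ := hr.trans_le ha
  have hb0 : 0 < ‖b‖ := hr.trans_le hb
  have hsplit : NormedSpace.normalize a - NormedSpace.normalize b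
      = ‖a‖⁻¹ • (a - b) + (‖a‖⁻¹ - ‖b‖⁻¹) • b := by
    simp only [NormedSpace.normalize, smul_sub, sub_smul]; abel
  have hfirst : ‖‖a‖⁻¹ • (a - b)‖ = ‖a - b‖ / ‖a‖ := by
    rw [norm_smul, norm_inv, norm_norm, inv_mul_eq_div]
  have hsecond : ‖(‖a‖⁻¹ - ‖b‖⁻¹) • b‖ ≤ ‖a - b‖ / ‖a‖ := by
    have hcoef : ‖a‖⁻¹ - ‖b‖⁻¹ = (‖b‖ - ‖a‖) / (‖a‖ * ‖b‖) := by field_simp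
    rw [norm_smul, hcoef, norm_div, norm_mul, norm_norm, norm_norm, Real.norm_eq_abs,
      div_mul_eq_mul_div, mul_div_mul_right _ _ hb0.ne', abs_sub_comm]
    gcongr
    exact abs_norm_sub_norm_le a b
  calc ‖NormedSpace.normalize a - NormedSpace.normalize b‖
      ≤ ‖a - b‖ / ‖a‖ + ‖a - b‖ / ‖a‖ := by
        rw [hsplit]; exact (norm_add_le _ _).trans (by rw [hfirst]; gcongr)
    _ = 2 * ‖a - b‖ / ‖a‖ := by ring
    _ ≤ 2 * ‖a - b‖ / r := by gcongr

lemma exists_nonneg_add_smul_mem_sphere {x c w : E} {R : ℝ} (hx : x ∈ closedBall c R)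
    (hw : w ≠ 0) : ∃ t : ℝ, 0 ≤ t ∧ x + t • w ∈ sphere c R := by
  have hR : 0 ≤ R := dist_nonneg.trans hx
  set T := 2 * R / ‖w‖
  have hT : 0 ≤ T := by positivity
  have hfar : R ≤ dist (x + T • w) c := by
    have hTw : dist (x + T • w) x = 2 * R := by
      rw [dist_self_add_left, norm_smul, Real.norm_of_nonneg hT,
        div_mul_cancel₀ _ (norm_ne_zero_iff.2 hw)]
    linarith [dist_triangle_right (x + T • w) x c, mem_closedBall.1 hx]
  obtain ⟨t, ht, hdist⟩ := intermediate_value_Icc hT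
    (by fun_prop : Continuous fun t : ℝ ↦ dist (x + t • w) c).continuousOn
    ⟨by simpa using hx, hfar⟩
  exact ⟨t, ht.1, hdist⟩

end NormedSpace

lemma Complex.norm_exp_I_mul_ofReal_sub_exp_I_mul_ofReal_le (θ φ : ℝ) :
    ‖exp (I * θ) - exp (I * φ)‖ ≤ |θ - φ| := by
  have h : exp (I * θ) - exp (I * φ) = exp (I * φ) * (exp (I * ↑(θ - φ)) - 1) := by
    rw [mul_sub, ← Complex.exp_add, mul_one]; push_cast; ring_nf
  rw [h, norm_mul, norm_exp_I_mul_ofReal, one_mul, ← Real.norm_eq_abs]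
  exact Real.norm_exp_I_mul_ofReal_sub_one_le

lemma Complex.exists_finset_sphere_net {m : ℕ} (hm : 0 < m) :
    ∃ N : Finset ℂ, N.card ≤ m ∧ ↑N ⊆ sphere (0 : ℂ) 1 ∧
      ∀ w ∈ sphere (0 : ℂ) 1, ∃ z ∈ N, ‖z - w‖ ≤ 2 * π / m := by
  classical
  set angle : ℕ → ℝ := fun k ↦ π - 2 * π * k / m
  refine ⟨(Finset.range m).image fun k ↦ exp (I * angle k),
    Finset.card_image_le.trans (Finset.card_range m).le, ?_, fun w hw ↦ ?_⟩
  · simp only [Finset.coe_image, Set.image_subset_iff]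
    exact fun k _ ↦ mem_sphere_zero_iff_norm.2 (norm_exp_I_mul_ofReal _)
  have hwθ : exp (I * arg w) = w := by
    have h := norm_mul_exp_arg_mul_I w
    rwa [mem_sphere_zero_iff_norm.1 hw, ofReal_one, one_mul, mul_comm] at h
  have hm' : (0 : ℝ) < m := Nat.cast_pos.2 hm
  set x := (π - arg w) * m / (2 * π)
  have hx0 : 0 ≤ x := by have := arg_le_pi w; positivity
  have hxm : x < m := by
    rw [div_lt_iff₀ (by positivity)]
    nlinarith [neg_pi_lt_arg w]
  set k := ⌊x⌋₊
  have hkm : k < m := (Nat.floor_lt hx0).2 hxm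
  refine ⟨_, Finset.mem_image_of_mem _ (Finset.mem_range.2 hkm), ?_⟩
  rw [← hwθ]
  refine (norm_exp_I_mul_ofReal_sub_exp_I_mul_ofReal_le _ _).trans ?_
  have hangle : angle k - arg w = 2 * π / m * (x - k) := by
    simp only [angle, x]; field_simp; ring
  rw [hangle, abs_mul, abs_of_pos (by positivity),
    abs_of_nonneg (sub_nonneg.2 (Nat.floor_le hx0))]
  exact mul_le_of_le_one_right (by positivity) (by linarith [Nat.lt_floor_add_one x])

lemma exists_finset_sphere_net {E : Type*} [NormedAddCommGroup E] [NormedSpace ℝ E]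
    (e : E ≃ₗᵢ[ℝ] ℂ) (c : E) {R : ℝ} (hR : 0 < R) {m : ℕ} (hm : 0 < m) :
    ∃ N : Finset E, N.card ≤ m ∧ ↑N ⊆ sphere c R ∧
      ∀ y ∈ sphere c R, ∃ z ∈ N, ‖z - y‖ ≤ 2 * π * R / m := by
  classical
  obtain ⟨N, hNcard, hN, hnet⟩ := Complex.exists_finset_sphere_net hm
  set embed : ℂ → E := fun w ↦ c + R • e.symm w
  have hembed : ∀ w w', ‖embed w - embed w'‖ = R * ‖w - w'‖ := fun w w' ↦ by
    rw [show embed w - embed w' = R • e.symm (w - w') by simp [embed, smul_sub],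
      norm_smul, LinearIsometryEquiv.norm_map, Real.norm_of_nonneg hR.le]
  refine ⟨N.image embed, Finset.card_image_le.trans hNcard, ?_, fun y hy ↦ ?_⟩
  · simp only [Finset.coe_image, Set.image_subset_iff]
    intro w hw
    simp [embed, norm_smul, abs_of_pos hR, mem_sphere_zero_iff_norm.1 (hN hw)]
  set w := e (R⁻¹ • (y - c))
  have hyw : embed w = y := by
    simp only [embed, w, LinearIsometryEquiv.symm_apply_apply, smul_smul,
      mul_inv_cancel₀ hR.ne', one_smul, add_sub_cancel]
  have hw : w ∈ sphere (0 : ℂ) 1 := by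
    rw [mem_sphere_zero_iff_norm, LinearIsometryEquiv.norm_map, norm_smul, ← dist_eq_norm,
      mem_sphere.1 hy, norm_inv, Real.norm_of_nonneg hR.le, inv_mul_cancel₀ hR.ne']
  obtain ⟨z, hzN, hzw⟩ := hnet w hw
  refine ⟨embed z, Finset.mem_image_of_mem _ hzN, ?_⟩
  rw [← hyw, hembed]
  exact (mul_le_mul_of_nonneg_left hzw hR.le).trans_eq (by ring)

section InnerProductSpace

variable {F : Type*} [NormedAddCommGroup F] [InnerProductSpace ℝ F]

lemma exists_mem_forall_inner_sub_le_zero {P : Set F} (hne : P.Nonempty) (hc : IsComplete P)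
    (hconv : Convex ℝ P) (z : F) : ∃ p ∈ P, ∀ x ∈ P, ⟪z - p, x - p⟫ ≤ 0 := by
  obtain ⟨p, hpP, hp⟩ := exists_norm_eq_iInf_of_complete_convex hne hc hconv z
  exact ⟨p, hpP, (norm_eq_iInf_iff_real_inner_le_zero hconv hpP).1 hp⟩

lemma norm_sub_le_norm_sub_of_inner_le_zero {z₁ z₂ p₁ p₂ : F} (h₁ : ⟪z₁ - p₁, p₂ - p₁⟫ ≤ 0)
    (h₂ : ⟪z₂ - p₂, p₁ - p₂⟫ ≤ 0) : ‖p₁ - p₂‖ ≤ ‖z₁ - z₂‖ := by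
  have hsq : ‖p₁ - p₂‖ ^ 2 ≤ ⟪z₁ - z₂, p₁ - p₂⟫ := by
    have h₁' : ⟪z₁ - p₁, p₁ - p₂⟫ = -⟪z₁ - p₁, p₂ - p₁⟫ := by
      rw [← inner_neg_right, neg_sub]
    have hexpand : ⟪z₁ - z₂, p₁ - p₂⟫
        = ‖p₁ - p₂‖ ^ 2 + ⟪z₁ - p₁, p₁ - p₂⟫ - ⟪z₂ - p₂, p₁ - p₂⟫ := by
      rw [show z₁ - z₂ = (p₁ - p₂) + (z₁ - p₁) - (z₂ - p₂) by abel, inner_sub_left,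
        inner_add_left, real_inner_self_eq_norm_sq]
    linarith
  have hcs := hsq.trans (real_inner_le_norm _ _)
  rcases (norm_nonneg (p₁ - p₂)).eq_or_lt with h | h
  · exact h ▸ norm_nonneg _
  · nlinarith

lemma inner_le_inner_add_smul_normalize {P : Set F} {z z' p p' x : F} {r ε δ : ℝ}
    (hpP : p ∈ P) (hp : ∀ x ∈ P, ⟪z - p, x - p⟫ ≤ 0)
    (hp'P : p' ∈ P) (hp' : ∀ x ∈ P, ⟪z' - p', x - p'⟫ ≤ 0)
    (hr : 0 < r) (hzp : r ≤ ‖z - p‖) (hzp' : r ≤ ‖z' - p'‖) (hzz' : ‖z - z'‖ ≤ δ)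
    (hε : 0 ≤ ε) (hδ : 4 * δ * (ε + δ) ≤ ε * r) (hx : x ∈ P) :
    ⟪z' - p', x⟫ ≤ ⟪z' - p', p + ε • NormedSpace.normalize (z - p)⟫ := by
  set u := NormedSpace.normalize (z - p)
  set u' := NormedSpace.normalize (z' - p')
  set η := 4 * δ / r
  have hpp' : ‖p - p'‖ ≤ δ :=
    (norm_sub_le_norm_sub_of_inner_le_zero (hp p' hp'P) (hp' p hpP)).trans hzz'
  have hη : ‖u' - u‖ ≤ η := by
    have h : ‖(z' - p') - (z - p)‖ ≤ 2 * δ := by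
      rw [show (z' - p') - (z - p) = (p - p') - (z - z') by abel]
      linarith [norm_sub_le (p - p') (z - z')]
    calc ‖u' - u‖ ≤ 2 * ‖(z' - p') - (z - p)‖ / r :=
          norm_normalize_sub_normalize_le hr hzp' hzp
      _ ≤ 2 * (2 * δ) / r := by gcongr
      _ = η := by ring
  have hu : ‖u‖ = 1 := NormedSpace.norm_normalize (norm_pos_iff.1 (hr.trans_le hzp))
  have hnormal : 0 ≤ ⟪u, p - p'⟫ := by
    have h := hp p' hp'P
    rw [← neg_sub p p', inner_neg_right] at h
    exact real_inner_smul_left (z - p) _ _ ▸ mul_nonneg (by positivity) (by linarith)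
  have hcross : -(η * δ) ≤ ⟪u' - u, p - p'⟫ := by
    have h := (abs_real_inner_le_norm (u' - u) (p - p')).trans
      (mul_le_mul hη hpp' (norm_nonneg _) ((norm_nonneg _).trans hη))
    linarith [neg_abs_le ⟪u' - u, p - p'⟫]
  have hunit : 1 - η ≤ ⟪u', u⟫ := by
    have h : |⟪u' - u, u⟫| ≤ η :=
      (abs_real_inner_le_norm _ _).trans (by rw [hu, mul_one]; exact hη)
    have hsplit : ⟪u', u⟫ = ⟪u, u⟫ + ⟪u' - u, u⟫ := by
      simp only [inner_sub_left, add_sub_cancel]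
    rw [hsplit, real_inner_self_eq_norm_sq, hu]
    linarith [neg_abs_le ⟪u' - u, u⟫]
  have hsupport : ⟪u', p'⟫ ≤ ⟪u', p + ε • u⟫ := by
    have hsplit : ⟪u', p + ε • u⟫
        = ⟪u', p'⟫ + ⟪u, p - p'⟫ + ⟪u' - u, p - p'⟫ + ε * ⟪u', u⟫ := by
      simp only [inner_add_right, real_inner_smul_right, inner_sub_left, inner_sub_right]; ring
    have hηδ : η * (ε + δ) ≤ ε := by
      rw [show η * (ε + δ) = 4 * δ * (ε + δ) / r by ring, div_le_iff₀ hr]; exact hδ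
    rw [hsplit]
    nlinarith
  have hscale : z' - p' = ‖z' - p'‖ • u' := (NormedSpace.norm_smul_normalize _).symm
  calc ⟪z' - p', x⟫ ≤ ⟪z' - p', p'⟫ := by
        have h := hp' x hx
        rw [inner_sub_right] at h; linarith
    _ ≤ ⟪z' - p', p + ε • u⟫ := by
        rw [hscale, real_inner_smul_left, real_inner_smul_left]
        exact mul_le_mul_of_nonneg_left hsupport (norm_nonneg _)

lemma exists_mem_forall_inner_le_inner_add_smul_normalize [Nontrivial F] {P : Set F}
    (hPc : IsCompact P) {p : F → F} (hpP : ∀ z, p z ∈ P)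
    (hp : ∀ z, ∀ x ∈ P, ⟪z - p z, x - p z⟫ ≤ 0) {z₀ : F} {D ε δ : ℝ}
    (hPD : P ⊆ closedBall z₀ D) (hD : 0 < D) (hε : 0 ≤ ε) (hδ : 4 * δ * (ε + δ) ≤ ε * D)
    {N : Set F} (hN : N ⊆ sphere z₀ (2 * D))
    (hnet : ∀ y ∈ sphere z₀ (2 * D), ∃ z ∈ N, ‖z - y‖ ≤ δ) (w : F) :
    ∃ z ∈ N, ∀ x ∈ P, ⟪w, x⟫ ≤ ⟪w, p z + ε • NormedSpace.normalize (z - p z)⟫ := by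
  rcases eq_or_ne w 0 with rfl | hw
  · obtain ⟨y, hy⟩ := (NormedSpace.sphere_nonempty (x := z₀)).2 (by positivity : 0 ≤ 2 * D)
    obtain ⟨z, hzN, -⟩ := hnet y hy
    exact ⟨z, hzN, fun x _ ↦ by simp only [inner_zero_left, le_refl]⟩
  obtain ⟨ps, hpsP, hps⟩ :=
    hPc.exists_isMaxOn ⟨_, hpP z₀⟩ (f := fun x ↦ ⟪w, x⟫) (by fun_prop)
  obtain ⟨t, ht, hzs⟩ := exists_nonneg_add_smul_mem_sphere
    (closedBall_subset_closedBall (by linarith : D ≤ 2 * D) (hPD hpsP)) hw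
  have hfar : D ≤ ‖ps + t • w - ps‖ := le_norm_sub_of_mem_sphere hzs (hPD hpsP)
  rw [add_sub_cancel_left] at hfar
  have ht0 : 0 < t := by
    refine ht.lt_of_ne fun h ↦ ?_
    rw [← h, zero_smul, norm_zero] at hfar
    linarith
  have hsupport : ∀ x ∈ P, ⟪ps + t • w - ps, x - ps⟫ ≤ 0 := fun x hx ↦ by
    rw [add_sub_cancel_left, real_inner_smul_left, inner_sub_right]
    exact mul_nonpos_of_nonneg_of_nonpos ht (sub_nonpos.2 (hps hx))
  obtain ⟨z, hzN, hzzs⟩ := hnet _ hzs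
  refine ⟨z, hzN, fun x hx ↦ ?_⟩
  have h := inner_le_inner_add_smul_normalize (hpP z) (hp z) hpsP hsupport hD
    (le_norm_sub_of_mem_sphere (hN hzN) (hPD (hpP z))) (by rwa [add_sub_cancel_left]) hzzs hε hδ
    hx
  rw [add_sub_cancel_left, real_inner_smul_left, real_inner_smul_left] at h
  exact le_of_mul_le_mul_left h ht0

theorem exists_finset_subset_convexHull_subset_cthickening [CompleteSpace F] [Nontrivial F]
    {P : Set F} (hPc : IsCompact P) (hPconv : Convex ℝ P) {z₀ : F} (hz₀ : z₀ ∈ P) {D ε δ : ℝ}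
    (hPD : P ⊆ closedBall z₀ D) (hD : 0 < D) (hε : 0 ≤ ε) (hδ : 4 * δ * (ε + δ) ≤ ε * D)
    (N : Finset F) (hN : ↑N ⊆ sphere z₀ (2 * D))
    (hnet : ∀ y ∈ sphere z₀ (2 * D), ∃ z ∈ N, ‖z - y‖ ≤ δ) :
    ∃ V : Finset F, V.card ≤ N.card ∧ P ⊆ convexHull ℝ (V : Set F) ∧
      convexHull ℝ (V : Set F) ⊆ cthickening ε P := by
  classical
  choose p hpP hp using
    exists_mem_forall_inner_sub_le_zero ⟨z₀, hz₀⟩ hPc.isComplete hPconv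
  set g : F → F := fun z ↦ p z + ε • NormedSpace.normalize (z - p z)
  refine ⟨N.image g, Finset.card_image_le, ?_, ?_⟩
  · rw [← iInter_halfSpaces_eq (convex_convexHull ℝ _)
      ((N.image g).finite_toSet.isCompact_convexHull (𝕜 := ℝ)).isClosed]
    intro q hq
    simp only [Set.mem_iInter, Set.mem_ofPred_eq]
    intro f
    obtain ⟨z, hzN, hz⟩ := exists_mem_forall_inner_le_inner_add_smul_normalize hPc hpP hp hPD
      hD hε hδ hN hnet ((InnerProductSpace.toDual ℝ F).symm f)
    refine ⟨g z, subset_convexHull ℝ _ (Finset.mem_coe.2 (Finset.mem_image_of_mem g hzN)),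
      ?_⟩
    simpa only [InnerProductSpace.toDual_symm_apply] using hz q hq
  · refine convexHull_min ?_ (hPconv.cthickening ε)
    simp only [Finset.coe_image, Set.image_subset_iff]
    intro z hzN
    refine mem_cthickening_of_dist_le _ (p z) ε P (hpP z) ?_
    have hne : z - p z ≠ 0 := norm_pos_iff.1
      (hD.trans_le (le_norm_sub_of_mem_sphere (hN hzN) (hPD (hpP z))))
    simp only [g, dist_self_add_left, norm_smul, NormedSpace.norm_normalize hne,
      Real.norm_of_nonneg hε, mul_one, le_refl]

end InnerProductSpace

lemma four_mul_mul_add_le {D ε m : ℝ} (hε : 0 < ε) (hεD : ε ≤ D)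
    (hm : 20 * π * √(D / ε) ≤ m) :
    4 * (2 * π * (2 * D) / m) * (ε + 2 * π * (2 * D) / m) ≤ ε * D := by
  set s := √(D / ε)
  set δ := 2 * π * (2 * D) / m
  have hD : 0 < D := hε.trans_le hεD
  have hs1 : 1 ≤ s := Real.one_le_sqrt.2 ((one_le_div hε).2 hεD)
  have hs2 : s ^ 2 * ε = D := by rw [Real.sq_sqrt (by positivity), div_mul_cancel₀ _ hε.ne']
  have hm0 : 0 < m := lt_of_lt_of_le (by positivity) hm
  have hδ0 : 0 ≤ δ := by positivity
  have hδs : δ * s ≤ D / 5 := by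
    rw [div_mul_eq_mul_div, div_le_iff₀ hm0]
    nlinarith [mul_le_mul_of_nonneg_left hm hD.le]
  have hδ : δ ≤ D / 5 := by nlinarith
  have hδ2 : δ ^ 2 * D ≤ ε * D * D / 25 := by
    have hsq := mul_le_mul hδs hδs (by positivity) (by positivity)
    nlinarith
  have hδ2' : δ ^ 2 ≤ ε * D / 25 := by
    rw [le_div_iff₀ (by norm_num)]
    nlinarith
  nlinarith

/-- Dudley's approximation theorem in the plane: there is an absolute constant `C` such
that for any compact convex `P ⊆ ℝ²` of diameter `D` and any `ε > 0`, there is a convex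
polygon `Q ⊇ P` with at most `C·√(D/ε)` vertices all of whose points are within
distance `ε` of `P`. -/
theorem dudley_approximation :
    ∃ C : ℝ, 0 < C ∧
      ∀ (P : Set (EuclideanSpace ℝ (Fin 2))) (D ε : ℝ),
        P.Nonempty → IsCompact P → Convex ℝ P → Metric.diam P = D → 0 < ε → ε ≤ D →
        ∃ V : Finset (EuclideanSpace ℝ (Fin 2)),
          (V.card : ℝ) ≤ C * Real.sqrt (D / ε) ∧
          P ⊆ convexHull ℝ (V : Set (EuclideanSpace ℝ (Fin 2))) ∧
          ∀ x ∈ convexHull ℝ (V : Set (EuclideanSpace ℝ (Fin 2))), infDist x P ≤ ε := by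
  refine ⟨64, by norm_num, fun P D ε ⟨z₀, hz₀⟩ hPc hPconv hdiam hε hεD ↦ ?_⟩
  have hD : 0 < D := hε.trans_le hεD
  have hPD : P ⊆ closedBall z₀ D :=
    fun x hx ↦ hdiam ▸ dist_le_diam_of_mem hPc.isBounded hx hz₀
  have hs : 1 ≤ √(D / ε) := Real.one_le_sqrt.2 ((one_le_div hε).2 hεD)
  -- chosen so that the net on the circle of radius `2D` has spacing `4πD / m ≤ √(εD) / 5`
  set m := ⌈20 * π * √(D / ε)⌉₊
  obtain ⟨N, hNcard, hN, hnet⟩ :=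
    exists_finset_sphere_net Complex.orthonormalBasisOneI.repr.symm z₀ (by positivity : 0 < 2 * D)
      (Nat.ceil_pos.2 (by positivity) : 0 < m)
  obtain ⟨V, hVcard, hPV, hVε⟩ := exists_finset_subset_convexHull_subset_cthickening hPc hPconv
    hz₀ hPD hD hε.le (four_mul_mul_add_le hε hεD (Nat.le_ceil _)) N hN hnet
  refine ⟨V, ?_, hPV, fun x hx ↦
    ENNReal.toReal_le_of_le_ofReal hε.le (mem_cthickening_iff.1 (hVε hx))⟩
  calc (V.card : ℝ) ≤ m := by exact_mod_cast hVcard.trans hNcard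
    _ ≤ 20 * π * √(D / ε) + 1 := (Nat.ceil_lt_add_one (by positivity)).le
    _ ≤ 64 * √(D / ε) := by nlinarith [pi_lt_d2]
end

section
/- For a convex polygon P whose minimum internal vertex angle is θ, every point p on the boundary of the outer offset polygon P[ε] satisfies ε ≤ dist(p, P) ≤ ε / sin(θ/2). -/
/-!
The lower bound holds because `p` lies on a shifted edge line `⟪uᵢ, x⟫ = cᵢ + ε`, while all of
`P` lies behind `⟪uᵢ, x⟫ = cᵢ`. For the upper bound let `q` be the point of `P` nearest to `p`.
Then `p - q` lies in the normal cone of `P` at `q`, which is spanned by the normals of the edges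
through `q`, any two of which make an angle at most `π - θ`. In the plane this forces `p - q` to
make an angle at most `(π - θ) / 2` with one of these normals `uᵢ`, so
`sin (θ / 2) * ‖p - q‖ ≤ ⟪uᵢ, p - q⟫ = ⟪uᵢ, p⟫ - cᵢ ≤ ε`. Were every such angle larger, a
suitable tilt `p - q + β • J (p - q)` of `p - q` by the quarter turn `J`, with `β` given by Helly's
theorem on the line, would be a feasible direction at `q` at an acute angle to `p - q`,
contradicting the minimality of `‖p - q‖`.
-/

open Filter Topology Metric Module
open scoped RealInnerProductSpace

theorem mul_add_mul_lt_of_sq_lt_sq {σ A B C D : ℝ} (hB : 0 < B) (hD : D < 0)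
    (hAB : A ^ 2 + B ^ 2 = 1) (hCD : C ^ 2 + D ^ 2 = 1)
    (hA : A ^ 2 < σ ^ 2) (hC : C ^ 2 < σ ^ 2) : A * C + B * D < 2 * σ ^ 2 - 1 := by
  have hAC : A * C < σ ^ 2 := by nlinarith [sq_nonneg (A + C), sq_nonneg (A - C)]
  have hBD : B * D < σ ^ 2 - 1 := by
    nlinarith [mul_pos hB (neg_pos.2 hD), sq_nonneg (B + D)]
  linarith

/-- For unit vectors `(A, B)` above and `(C, D)` below the first axis, both at angle more than
`α = arccos σ` from it and at angle at most `2 α` from each other, the short arc between them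
passes through `(-1, 0)`. -/
theorem mul_le_mul_of_two_mul_sq_sub_one_le {σ A B C D : ℝ} (hA : A < σ) (hC : C < σ)
    (hB : 0 < B) (hD : D < 0) (hAB : A ^ 2 + B ^ 2 = 1) (hCD : C ^ 2 + D ^ 2 = 1)
    (hAC : 2 * σ ^ 2 - 1 ≤ A * C + B * D) : C * B ≤ A * D := by
  by_contra! hlt
  suffices A ^ 2 < σ ^ 2 ∧ C ^ 2 < σ ^ 2 from
    (mul_add_mul_lt_of_sq_lt_sq hB hD hAB hCD this.1 this.2).not_ge hAC
  rcases le_or_gt A 0 with hA0 | hA0 <;> rcases le_or_gt C 0 with hC0 | hC0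
  · nlinarith [mul_nonneg (neg_nonneg.2 hA0) (neg_nonneg.2 hD.le)]
  · have : A ^ 2 < C ^ 2 := by nlinarith [mul_nonneg (neg_nonneg.2 hA0) (neg_nonneg.2 hD.le)]
    constructor <;> nlinarith
  · have : C ^ 2 < A ^ 2 := by nlinarith [mul_nonneg (neg_nonneg.2 hC0) hB.le]
    constructor <;> nlinarith
  · constructor <;> nlinarith

/-- Helly's theorem on the line for the rays `{β | a i + β * b i ≤ 0}`: `hcross` says that every
ray bounded above meets every ray bounded below. -/
theorem exists_forall_add_mul_nonpos {ι : Type*} (s : Finset ι) (a b : ι → ℝ)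
    (hzero : ∀ i ∈ s, b i = 0 → a i ≤ 0)
    (hcross : ∀ i ∈ s, ∀ j ∈ s, 0 < b i → b j < 0 → a j * b i ≤ a i * b j) :
    ∃ β : ℝ, ∀ i ∈ s, a i + β * b i ≤ 0 := by
  set L := (s.filter (b · < 0)).image fun j ↦ a j / -b j
  set U := (s.filter (0 < b ·)).image fun i ↦ -a i / b i
  obtain ⟨m, hm⟩ := U.bddBelow
  have hLU : ∀ l ∈ insert m L, ∀ r ∈ U, l ≤ r := by
    intro l hl r hr
    obtain ⟨i, hi, rfl⟩ := Finset.mem_image.1 hr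
    rw [Finset.mem_filter] at hi
    rcases Finset.mem_insert.1 hl with rfl | hl
    · exact hm hr
    obtain ⟨j, hj, rfl⟩ := Finset.mem_image.1 hl
    rw [Finset.mem_filter] at hj
    rw [div_le_div_iff₀ (neg_pos.2 hj.2) hi.2]
    linarith [hcross i hi.1 j hj.1 hi.2 hj.2]
  obtain ⟨β, hLβ, hβU⟩ : ∃ β, (∀ l ∈ L, l ≤ β) ∧ ∀ r ∈ U, β ≤ r :=
    ⟨(insert m L).max' (Finset.insert_nonempty _ _),
      fun l hl ↦ Finset.le_max' _ _ (Finset.mem_insert_of_mem hl),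
      fun r hr ↦ Finset.max'_le _ _ _ fun l hl ↦ hLU l hl r hr⟩
  refine ⟨β, fun i hi ↦ ?_⟩
  rcases lt_trichotomy (b i) 0 with hb | hb | hb
  · have := hLβ _ (Finset.mem_image_of_mem (fun j ↦ a j / -b j) (Finset.mem_filter.2 ⟨hi, hb⟩))
    rw [div_le_iff₀ (neg_pos.2 hb)] at this
    linarith
  · simpa [hb] using hzero i hi hb
  · have := hβU _ (Finset.mem_image_of_mem (fun i ↦ -a i / b i) (Finset.mem_filter.2 ⟨hi, hb⟩))
    rw [le_div_iff₀ hb] at this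
    linarith

section Polyhedron

variable {E : Type*} [NormedAddCommGroup E] [InnerProductSpace ℝ E] {ι : Type*}

def polyhedron (u : ι → E) (c : ι → ℝ) : Set E := ⋂ i, {x | ⟪u i, x⟫ ≤ c i}

variable {u : ι → E} {c : ι → ℝ}

theorem mem_polyhedron {x : E} : x ∈ polyhedron u c ↔ ∀ i, ⟪u i, x⟫ ≤ c i :=
  Set.mem_iInter

theorem isClosed_polyhedron : IsClosed (polyhedron u c) :=
  isClosed_iInter fun _ ↦ isClosed_le (continuous_const.inner continuous_id) continuous_const

theorem convex_polyhedron : Convex ℝ (polyhedron u c) :=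
  convex_iInter fun i ↦ convex_halfSpace_le (innerₛₗ ℝ (u i)).isLinear (c i)

theorem le_infDist_polyhedron {i : ι} (hu : ‖u i‖ = 1) (hne : (polyhedron u c).Nonempty)
    {p : E} {ε : ℝ} (hp : c i + ε ≤ ⟪u i, p⟫) : ε ≤ infDist p (polyhedron u c) := by
  refine (le_infDist hne).2 fun y hy ↦ ?_
  calc ε ≤ ⟪u i, p - y⟫ := by rw [inner_sub_right]; linarith [mem_polyhedron.1 hy i]
    _ ≤ ‖u i‖ * ‖p - y‖ := real_inner_le_norm _ _
    _ = dist p y := by rw [hu, one_mul, dist_eq_norm]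

variable [Finite ι]

theorem exists_eq_of_mem_frontier_polyhedron {x : E} (hx : x ∈ frontier (polyhedron u c)) :
    x ∈ polyhedron u c ∧ ∃ i, ⟪u i, x⟫ = c i := by
  have hmem := isClosed_polyhedron.frontier_subset hx
  refine ⟨hmem, ?_⟩
  by_contra! hne
  have hopen : IsOpen (⋂ i, {y : E | ⟪u i, y⟫ < c i}) :=
    isOpen_iInter_of_finite fun i ↦ isOpen_lt (continuous_const.inner continuous_id)
      continuous_const
  refine hx.2 (interior_maximal (fun y hy ↦ ?_) hopen ?_)
  · exact mem_polyhedron.2 fun i ↦ (Set.mem_iInter.1 hy i).le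
  · exact Set.mem_iInter.2 fun i ↦ (mem_polyhedron.1 hmem i).lt_of_ne (hne i)

theorem exists_pos_add_smul_mem_polyhedron {q w : E} (hq : q ∈ polyhedron u c)
    (hw : ∀ i, ⟪u i, q⟫ = c i → ⟪u i, w⟫ ≤ 0) : ∃ t : ℝ, 0 < t ∧ q + t • w ∈ polyhedron u c := by
  suffices ∀ᶠ t in 𝓝[>] (0 : ℝ), q + t • w ∈ polyhedron u c from
    (this.and self_mem_nhdsWithin).exists.imp fun t ht ↦ ⟨ht.2, ht.1⟩
  simp only [mem_polyhedron, inner_add_right, real_inner_smul_right, eventually_all]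
  intro i
  rcases (mem_polyhedron.1 hq i).eq_or_lt with hact | hslack
  · filter_upwards [self_mem_nhdsWithin] with t (ht : 0 < t)
    nlinarith [hw i hact]
  · have hlim : Tendsto (fun t : ℝ ↦ ⟪u i, q⟫ + t * ⟪u i, w⟫) (𝓝[>] 0) (𝓝 ⟪u i, q⟫) :=
      tendsto_nhdsWithin_of_tendsto_nhds <| by
        simpa using ((continuous_id.mul continuous_const).const_add ⟪u i, q⟫).tendsto (0 : ℝ)
    exact (hlim.eventually_lt_const hslack).mono fun t ht ↦ ht.le

theorem exists_mem_polyhedron_forall_inner_sub_nonpos [CompleteSpace E]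
    (hne : (polyhedron u c).Nonempty) (p : E) :
    ∃ q ∈ polyhedron u c, ∀ w, (∀ i, ⟪u i, q⟫ = c i → ⟪u i, w⟫ ≤ 0) → ⟪p - q, w⟫ ≤ 0 := by
  obtain ⟨q, hq, hnear⟩ := exists_norm_eq_iInf_of_complete_convex hne
    isClosed_polyhedron.isComplete convex_polyhedron p
  rw [norm_eq_iInf_iff_real_inner_le_zero convex_polyhedron hq] at hnear
  refine ⟨q, hq, fun w hw ↦ ?_⟩
  obtain ⟨t, ht, hmem⟩ := exists_pos_add_smul_mem_polyhedron hq hw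
  have := hnear _ hmem
  rw [add_sub_cancel_left, real_inner_smul_right] at this
  exact nonpos_of_mul_nonpos_right this ht

end Polyhedron

section Plane

variable {E : Type*} [NormedAddCommGroup E] [InnerProductSpace ℝ E] [Fact (finrank ℝ E = 2)]

theorem exists_mul_norm_le_inner_of_forall_inner_nonpos {ι : Type*} (s : Finset ι) (u : ι → E)
    (hu : ∀ i ∈ s, ‖u i‖ = 1) {σ : ℝ} (hσ : σ ≤ 1)
    (hpair : ∀ i ∈ s, ∀ j ∈ s, i ≠ j → 2 * σ ^ 2 - 1 ≤ ⟪u i, u j⟫) {x : E} (hx : x ≠ 0)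
    (hcone : ∀ w, (∀ i ∈ s, ⟪u i, w⟫ ≤ 0) → ⟪x, w⟫ ≤ 0) :
    ∃ i ∈ s, σ * ‖x‖ ≤ ⟪u i, x⟫ := by
  wlog hx1 : ‖x‖ = 1 generalizing x
  · have hxn : 0 < ‖x‖ := norm_pos_iff.2 hx
    obtain ⟨i, hi, h⟩ := this (x := ‖x‖⁻¹ • x) (smul_ne_zero (inv_ne_zero hxn.ne') hx)
      (fun w hw ↦ by
        rw [real_inner_smul_left]
        exact mul_nonpos_of_nonneg_of_nonpos (inv_nonneg.2 hxn.le) (hcone w hw))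
      (by rw [norm_smul, norm_inv, norm_norm, inv_mul_cancel₀ hxn.ne'])
    refine ⟨i, hi, ?_⟩
    rwa [real_inner_smul_right, norm_smul, norm_inv, norm_norm, inv_mul_cancel₀ hxn.ne', mul_one,
      ← div_eq_inv_mul, le_div_iff₀ hxn] at h
  rw [hx1, mul_one]
  by_contra! hlt
  have : FiniteDimensional ℝ E := .of_fact_finrank_eq_two
  let o : Orientation ℝ E (Fin 2) := (finBasisOfFinrankEq ℝ E Fact.out).orientation
  have hunit : ∀ i ∈ s, ⟪x, u i⟫ ^ 2 + o.areaForm x (u i) ^ 2 = 1 := fun i hi ↦ by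
    rw [o.inner_sq_add_areaForm_sq, hx1, hu i hi]; norm_num
  have hinner : ∀ i ∈ s, ∀ j ∈ s, ⟪x, u i⟫ * ⟪x, u j⟫ + o.areaForm x (u i) * o.areaForm x (u j)
      = ⟪u i, u j⟫ := fun i hi j hj ↦ by
    rw [o.inner_mul_inner_add_areaForm_mul_areaForm, hx1]; ring
  have hlt' : ∀ i ∈ s, ⟪x, u i⟫ < σ := fun i hi ↦ real_inner_comm x (u i) ▸ hlt i hi
  obtain ⟨β, hβ⟩ := exists_forall_add_mul_nonpos s (fun i ↦ ⟪x, u i⟫) (fun i ↦ o.areaForm x (u i))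
    (fun i hi hb ↦ by nlinarith [hunit i hi, hlt' i hi])
    (fun i hi j hj hbi hbj ↦ mul_le_mul_of_two_mul_sq_sub_one_le (hlt' i hi) (hlt' j hj) hbi hbj
      (hunit i hi) (hunit j hj)
      ((hinner i hi j hj).symm ▸ hpair i hi j hj (by rintro rfl; linarith)))
  have hw := hcone (x + β • o.rightAngleRotation x) fun i hi ↦ by
    rw [inner_add_right, real_inner_smul_right, real_inner_comm (o.rightAngleRotation x),
      o.inner_rightAngleRotation_left, real_inner_comm]
    exact hβ i hi
  rw [inner_add_right, real_inner_smul_right, o.inner_rightAngleRotation_right,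
    o.areaForm_apply_self, real_inner_self_eq_norm_sq, hx1] at hw
  norm_num at hw

end Plane

-- `cos (π - θ) ≤ ⟪u i, u j⟫` says that edges `i` and `j` meeting at a vertex make an internal
-- angle at least `θ`.
open Finset in
theorem offset_boundary_dist_bounds_general (kk : ℕ)
    (u : Fin kk → EuclideanSpace ℝ (Fin 2)) (c : Fin kk → ℝ)
    (hu : ∀ i, ‖u i‖ = 1)
    (P : Set (EuclideanSpace ℝ (Fin 2)))
    (hP : P = ⋂ i, {x | ⟪u i, x⟫ ≤ c i})
    (hint : (interior P).Nonempty)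
    (θ : ℝ) (hθ0 : 0 < θ) (hθπ : θ < Real.pi)
    (hangle : ∀ i j, i ≠ j →
      (∃ x ∈ P, ⟪u i, x⟫ = c i ∧ ⟪u j, x⟫ = c j) →
      Real.cos (Real.pi - θ) ≤ ⟪u i, u j⟫)
    (ε : ℝ) (hε : 0 < ε) :
    ∀ p ∈ frontier (⋂ i, {x | ⟪u i, x⟫ ≤ c i + ε}),
      ε ≤ infDist p P ∧ infDist p P ≤ ε / Real.sin (θ / 2) := by
  intro p hp
  change P = polyhedron u c at hP
  subst hP
  obtain ⟨hpQ, i₀, hi₀⟩ := exists_eq_of_mem_frontier_polyhedron (c := fun i ↦ c i + ε) hp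
  have hPne : (polyhedron u c).Nonempty := hint.mono interior_subset
  refine ⟨le_infDist_polyhedron (hu i₀) hPne hi₀.ge, ?_⟩
  obtain ⟨q, hq, hcone⟩ := exists_mem_polyhedron_forall_inner_sub_nonpos hPne p
  have hpq : p - q ≠ 0 := sub_ne_zero.2 fun h ↦ by
    linarith [mem_polyhedron.1 (h ▸ hq) i₀]
  have hcos : Real.cos (Real.pi - θ) = 2 * Real.sin (θ / 2) ^ 2 - 1 := by
    have := Real.cos_two_mul_eq_one_sub (θ / 2)
    rw [mul_div_cancel₀ _ two_ne_zero] at this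
    rw [Real.cos_pi_sub, this]; ring
  have : Fact (finrank ℝ (EuclideanSpace ℝ (Fin 2)) = 2) := ⟨finrank_euclideanSpace_fin⟩
  obtain ⟨i, hi, hle⟩ := exists_mul_norm_le_inner_of_forall_inner_nonpos
    (univ.filter fun i ↦ ⟪u i, q⟫ = c i) u (fun i _ ↦ hu i) (Real.sin_le_one _)
    (fun i hi j hj hij ↦ hcos ▸ hangle i j hij ⟨q, hq, (mem_filter.1 hi).2, (mem_filter.1 hj).2⟩)
    hpq fun w hw ↦ hcone w fun i hi ↦ hw i (mem_filter.2 ⟨mem_univ i, hi⟩)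
  have hσ : 0 < Real.sin (θ / 2) := Real.sin_pos_of_pos_of_lt_pi (by linarith) (by linarith)
  rw [inner_sub_right, (mem_filter.1 hi).2] at hle
  calc infDist p (polyhedron u c) ≤ dist p q := infDist_le_dist_of_mem hq
    _ = ‖p - q‖ := dist_eq_norm p q
    _ ≤ ε / Real.sin (θ / 2) := by
      rw [le_div_iff₀ hσ]; linarith [mem_polyhedron.1 hpQ i]

/-- For a convex polygon `P` (an intersection of supporting half-planes with unit
normals) with minimum internal vertex angle `θ`, every boundary point `p` of the outer
offset polygon `P[ε]` satisfies `ε ≤ dist(p, P) ≤ ε / sin(θ/2)`.  (The internal angle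
at a vertex shared by edges `i, j` being at least `θ` is encoded as
`cos(π − θ) ≤ ⟪uᵢ, uⱼ⟫`.) -/
theorem offset_boundary_dist_bounds (kk : ℕ)
    (u : Fin kk → EuclideanSpace ℝ (Fin 2)) (c : Fin kk → ℝ)
    (hu : ∀ i, ‖u i‖ = 1)
    (P : Set (EuclideanSpace ℝ (Fin 2)))
    (hP : P = ⋂ i, {x | ⟪u i, x⟫ ≤ c i})
    (hcompact : IsCompact P) (hint : (interior P).Nonempty)
    (hsupp : ∀ i, ∃ x ∈ P, ⟪u i, x⟫ = c i)
    (θ : ℝ) (hθ0 : 0 < θ) (hθπ : θ < Real.pi)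
    (hangle : ∀ i j, i ≠ j →
      (∃ x ∈ P, ⟪u i, x⟫ = c i ∧ ⟪u j, x⟫ = c j) →
      Real.cos (Real.pi - θ) ≤ ⟪u i, u j⟫)
    (ε : ℝ) (hε : 0 < ε) :
    ∀ p ∈ frontier (⋂ i, {x | ⟪u i, x⟫ ≤ c i + ε}),
      ε ≤ infDist p P ∧ infDist p P ≤ ε / Real.sin (θ / 2) :=
  offset_boundary_dist_bounds_general kk u c hu P hP hint θ hθ0 hθπ hangle ε hε
end
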